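/- In the setting below, for every simple tensor x = m⊗p ∈ M(σ)⊗S(p₀) (m ∈ M(σ), p ∈ S(p₀)) one has ⟨D⁺x, D⁺x⟩_{M⊗𝒫} − ⟨D⁻x, D⁻x⟩_{M⊗𝒫} = (−χ + σ(Ω(k)))·⟨x,x⟩_{M⊗𝒫}. -/

import Mathlib

/-!
Write `x = m ⊗ q`. Expanding both forms pairs `⟨z_i m, z_j m⟩` with
`⟨X_i q, X_j q⟩ - ⟨∂_i q, ∂_j q⟩`. For the Fischer product `X_i` is adjoint to `∂_i`, so this
difference is `δ_ij ⟨q, q⟩ + ⟨∂_j q, ∂_i q⟩ - ⟨∂_i q, ∂_j q⟩`, and the last two terms cancel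
because `q` has real coefficients. What remains is `∑ ⟨z_i m, z_i m⟩ = -⟨m, ∑ z_i² m⟩`, and
`∑ z_i² = Ω(g) - Ω(k)` acts on `M(σ)` by `χ - σ(Ω(k))`, since `Ω(k)` acts by `σ(Ω(k))` on the
image of every `k`-equivariant map `σ → M`.
-/

noncomputable section

open scoped TensorProduct ComplexOrder

open MvPolynomial

namespace MvPolynomial

variable {σ : Type*} [Fintype σ] [DecidableEq σ]

def IsFischerForm (FP : MvPolynomial σ ℂ →ₛₗ[starRingEnd ℂ] MvPolynomial σ ℂ →ₗ[ℂ] ℂ) : Prop :=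
  ∀ (d d' : σ →₀ ℕ) (c c' : ℂ),
    FP (monomial d c) (monomial d' c')
      = if d = d' then (∏ i, ((d i).factorial : ℂ)) * starRingEnd ℂ c * c' else 0

lemma prod_factorial_single_add (i : σ) (d : σ →₀ ℕ) :
    (∏ k, (((Finsupp.single i 1 + d : σ →₀ ℕ) k).factorial : ℂ))
      = (d i + 1) * ∏ k, ((d k).factorial : ℂ) := by
  have h : ∀ k, (((Finsupp.single i 1 + d : σ →₀ ℕ) k).factorial : ℂ)
      = (if k = i then (d i + 1 : ℂ) else 1) * (d k).factorial := by
    intro k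
    by_cases hk : k = i
    · subst hk; simp [add_comm 1, Nat.factorial_succ]
    · simp [hk]
  simp only [h, Finset.prod_mul_distrib, Finset.prod_ite_eq', Finset.mem_univ, if_true]

namespace IsFischerForm

variable {FP : MvPolynomial σ ℂ →ₛₗ[starRingEnd ℂ] MvPolynomial σ ℂ →ₗ[ℂ] ℂ}

lemma conj_apply (hFP : IsFischerForm FP) (a b : MvPolynomial σ ℂ) :
    starRingEnd ℂ (FP a b) = FP b a := by
  induction a using induction_on' with
  | add p q hp hq => simp only [map_add, LinearMap.add_apply, hp, hq]
  | monomial d c =>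
    induction b using induction_on' with
    | add p q hp hq => simp only [map_add, LinearMap.add_apply, hp, hq]
    | monomial d' c' =>
      rw [hFP, hFP]
      by_cases h : d = d'
      · subst h; simp [map_prod]; ring
      · simp [h, Ne.symm h]

lemma apply_map_conj (hFP : IsFischerForm FP) (a b : MvPolynomial σ ℂ) :
    FP (map (starRingEnd ℂ) a) (map (starRingEnd ℂ) b) = starRingEnd ℂ (FP a b) := by
  induction a using induction_on' with
  | add p q hp hq => simp only [map_add, LinearMap.add_apply, hp, hq]
  | monomial d c =>
    induction b using induction_on' with
    | add p q hp hq => simp only [map_add, hp, hq]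
    | monomial d' c' =>
      rw [map_monomial, map_monomial, hFP, hFP]
      split_ifs <;> simp [map_prod]

lemma apply_comm_of_real (hFP : IsFischerForm FP) {a b : MvPolynomial σ ℂ}
    (ha : map (starRingEnd ℂ) a = a) (hb : map (starRingEnd ℂ) b = b) : FP a b = FP b a := by
  calc FP a b = FP (map (starRingEnd ℂ) a) (map (starRingEnd ℂ) b) := by rw [ha, hb]
    _ = starRingEnd ℂ (FP a b) := hFP.apply_map_conj a b
    _ = FP b a := hFP.conj_apply a b

lemma X_mul_apply (hFP : IsFischerForm FP) (i : σ) (a b : MvPolynomial σ ℂ) :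
    FP (X i * a) b = FP a (pderiv i b) := by
  induction a using induction_on' with
  | add p q hp hq => simp only [mul_add, map_add, LinearMap.add_apply, hp, hq]
  | monomial d c =>
    induction b using induction_on' with
    | add p q hp hq => simp only [map_add, hp, hq]
    | monomial d' c' =>
      rw [← pow_one (X i), ← monomial_single_add, hFP]
      by_cases h0 : d' i = 0
      · have hne : Finsupp.single i 1 + d ≠ d' := fun h => by
          simp [← h] at h0
        simp [pderiv_monomial, h0, hne]
      · obtain ⟨e, rfl⟩ : ∃ e, d' = Finsupp.single i 1 + e :=
          ⟨d' - Finsupp.single i 1, by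
            rw [add_tsub_cancel_of_le (Finsupp.single_le_iff.mpr (Nat.one_le_iff_ne_zero.mpr h0))]⟩
        rw [pderiv_monomial, add_tsub_cancel_left, hFP]
        simp only [add_right_inj]
        split_ifs with h
        · subst h
          rw [prod_factorial_single_add, Finsupp.add_apply, Finsupp.single_eq_same]
          push_cast; ring
        · rfl

lemma apply_X_mul (hFP : IsFischerForm FP) (i : σ) (a b : MvPolynomial σ ℂ) :
    FP a (X i * b) = FP (pderiv i a) b := by
  rw [← hFP.conj_apply, hFP.X_mul_apply, hFP.conj_apply]

lemma apply_X_mul_sub_apply_pderiv (hFP : IsFischerForm FP) {q : MvPolynomial σ ℂ}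
    (hq : map (starRingEnd ℂ) q = q) (i j : σ) :
    FP (X i * q) (X j * q) - FP (pderiv i q) (pderiv j q) = if i = j then FP q q else 0 := by
  have hreal : ∀ k, map (starRingEnd ℂ) (pderiv k q) = pderiv k q := fun k => by
    rw [← pderiv_map, hq]
  rw [hFP.X_mul_apply, pderiv_mul, map_add, hFP.apply_X_mul,
    hFP.apply_comm_of_real (hreal j) (hreal i), add_sub_cancel_right, pderiv_X]
  by_cases h : i = j
  · subst h; simp
  · simp [h, Ne.symm h]

end IsFischerForm

end MvPolynomial

section HermitianTensor

variable {M P : Type*} [AddCommGroup M] [Module ℂ M] [AddCommGroup P] [Module ℂ P]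

lemma form_sum_tmul_sum_tmul {FM : M →ₛₗ[starRingEnd ℂ] M →ₗ[ℂ] ℂ}
    {FP : P →ₛₗ[starRingEnd ℂ] P →ₗ[ℂ] ℂ} {F : M ⊗[ℂ] P →ₛₗ[starRingEnd ℂ] M ⊗[ℂ] P →ₗ[ℂ] ℂ}
    (hF : ∀ m m' q q', F (m ⊗ₜ q) (m' ⊗ₜ q') = FM m m' * FP q q')
    {ι κ : Type*} [Fintype ι] [Fintype κ] (u : ι → M) (r : ι → P) (v : κ → M) (s : κ → P) :
    F (∑ i, u i ⊗ₜ r i) (∑ j, v j ⊗ₜ s j) = ∑ i, ∑ j, FM (u i) (v j) * FP (r i) (s j) := by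
  simp only [map_sum, LinearMap.sum_apply, hF]
  exact Finset.sum_comm

lemma form_dirac_sub_form_dirac {σ : Type*} [Fintype σ] [DecidableEq σ]
    {FM : M →ₛₗ[starRingEnd ℂ] M →ₗ[ℂ] ℂ}
    {FP : MvPolynomial σ ℂ →ₛₗ[starRingEnd ℂ] MvPolynomial σ ℂ →ₗ[ℂ] ℂ}
    {F : M ⊗[ℂ] MvPolynomial σ ℂ →ₛₗ[starRingEnd ℂ] M ⊗[ℂ] MvPolynomial σ ℂ →ₗ[ℂ] ℂ}
    (hF : ∀ m m' q q', F (m ⊗ₜ q) (m' ⊗ₜ q') = FM m m' * FP q q')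
    (hFP : IsFischerForm FP) (A : σ → Module.End ℂ M) (m : M) {q : MvPolynomial σ ℂ}
    (hq : map (starRingEnd ℂ) q = q) :
    let Dp := ∑ i, TensorProduct.map (A i) (LinearMap.mulLeft ℂ (X i))
    let Dm := ∑ i, TensorProduct.map (A i) (pderiv i).toLinearMap
    F (Dp (m ⊗ₜ q)) (Dp (m ⊗ₜ q)) - F (Dm (m ⊗ₜ q)) (Dm (m ⊗ₜ q))
      = (∑ i, FM (A i m) (A i m)) * FP q q := by
  intro Dp Dm
  have hDp : Dp (m ⊗ₜ q) = ∑ i, A i m ⊗ₜ (X i * q) := by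
    simp [Dp, LinearMap.sum_apply]
  have hDm : Dm (m ⊗ₜ q) = ∑ i, A i m ⊗ₜ pderiv i q := by
    simp [Dm, LinearMap.sum_apply]
  simp only [hDp, hDm, form_sum_tmul_sum_tmul hF, ← Finset.sum_sub_distrib, ← mul_sub,
    hFP.apply_X_mul_sub_apply_pderiv hq, mul_ite, mul_zero, Finset.sum_ite_eq,
    Finset.mem_univ, if_true, Finset.sum_mul]

end HermitianTensor

section Isotypic

variable {R V M : Type*} [CommRing R] [AddCommGroup V] [Module R V] [AddCommGroup M] [Module R M]

lemma apply_eq_smul_of_mem_sSup_range (P : (V →ₗ[R] M) → Prop) {S : Module.End R V}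
    {T : Module.End R M} {c : R} (hS : S = c • 1) (hT : ∀ f, P f → T ∘ₗ f = f ∘ₗ S) {m : M}
    (hm : m ∈ sSup {N | ∃ f, P f ∧ N = LinearMap.range f}) : T m = c • m := by
  suffices h : sSup {N | ∃ f, P f ∧ N = LinearMap.range f} ≤ LinearMap.ker (T - c • 1) by
    simpa [sub_eq_zero] using h hm
  refine sSup_le ?_
  rintro _ ⟨f, hf, rfl⟩ _ ⟨s, rfl⟩
  rw [LinearMap.mem_ker, LinearMap.sub_apply, ← LinearMap.comp_apply, hT f hf, hS]
  simp

lemma sum_mul_comp_of_intertwines {K ι : Type*} [Fintype ι] (ρ : K → Module.End R V)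
    (τ : K → Module.End R M) {f : V →ₗ[R] M} (hf : ∀ x s, f (ρ x s) = τ x (f s))
    (a b : ι → K) : (∑ j, τ (a j) * τ (b j)) ∘ₗ f = f ∘ₗ ∑ j, ρ (a j) * ρ (b j) := by
  ext s
  simp [hf]

end Isotypic

attribute [local instance 100] LieRing.ofAssociativeRing

section Statement6

variable (L : Type*) [LieRing L] [LieAlgebra ℂ L] [FiniteDimensional ℂ L]

theorem statement6
    -- `g = k ⊕ p`, a quadratic Lie algebra which is the complexification of a real
    -- Lie algebra `g₀ = k₀ ⊕ p₀`; `cj` is the complex conjugation fixing `g₀`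
    (cj : L → L)
    (k : Submodule ℂ L)
    -- a basis `{w_k}` of `k` with `B`-dual basis `{w^k}`
    (ιk : Type) [Fintype ιk]
    (w : Module.Basis ιk ℂ ↥k) (w' : ιk → ↥k)
    -- an orthonormal basis `{z_i}` of `(p₀, B)` (so `z^i = z_i`)
    (nn : ℕ) (z : Fin nn → L)
    (hzreal : ∀ i, cj (z i) = z i)
    -- `(π, M)`: a `g`-module with a hermitian form `⟨u·m,m'⟩ = ⟨m,u*·m'⟩`, `x* = −x̄`
    (M : Type*) [AddCommGroup M] [Module ℂ M]
    (π : L →ₗ⁅ℂ⁆ Module.End ℂ M)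
    (FM : M →ₛₗ[starRingEnd ℂ] M →ₗ[ℂ] ℂ)
    (hFMinv : ∀ (x : L) (m m' : M), FM (π x m) m' = - FM m (π (cj x) m'))
    -- `Ω(g)` acts on `M` by the scalar `χ`
    (χ : ℂ)
    (hχ : (∑ j, π ((w' j : L)) * π ((w j : L))) + (∑ i, π (z i) * π (z i))
      = χ • (1 : Module.End ℂ M))
    -- `σ`: a simple finite-dimensional `k`-module on which `Ω(k)` acts by `σ(Ω(k))`
    (σV : Type*) [AddCommGroup σV] [Module ℂ σV]
    (ρ : ↥k →ₗ[ℂ] Module.End ℂ σV)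
    (σΩ : ℂ)
    (hσΩ : (∑ j, ρ (w' j) * ρ (w j)) = σΩ • (1 : Module.End ℂ σV))
    -- `M(σ)`: the `σ`-isotypic component of `M`
    (Mσ : Submodule ℂ M)
    (hMσ : Mσ = sSup {N : Submodule ℂ M | ∃ f : σV →ₗ[ℂ] M,
      (∀ (x : ↥k) (s : σV), f (ρ x s) = π (x : L) (f s)) ∧ N = LinearMap.range f})
    -- `𝒫 = S(p)`, realized as polynomials in the orthonormal basis `{z_i}`, with the
    -- hermitian inner product `⟨P₁,P₂⟩ = (∂_{P₂}(conj P₁))(0)`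
    (FP : MvPolynomial (Fin nn) ℂ →ₛₗ[starRingEnd ℂ] MvPolynomial (Fin nn) ℂ →ₗ[ℂ] ℂ)
    (hFP : ∀ (d d' : Fin nn →₀ ℕ) (c c' : ℂ),
      FP (MvPolynomial.monomial d c) (MvPolynomial.monomial d' c')
        = if d = d' then (∏ i, ((d i).factorial : ℂ)) * starRingEnd ℂ c * c' else 0)
    -- the product hermitian form on `M ⊗ 𝒫`
    (F : M ⊗[ℂ] MvPolynomial (Fin nn) ℂ →ₛₗ[starRingEnd ℂ]
      M ⊗[ℂ] MvPolynomial (Fin nn) ℂ →ₗ[ℂ] ℂ)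
    (hF : ∀ (m m' : M) (q q' : MvPolynomial (Fin nn) ℂ),
      F (m ⊗ₜ[ℂ] q) (m' ⊗ₜ[ℂ] q') = FM m m' * FP q q')
    -- the symplectic Dirac operators on `M ⊗ 𝒫`
    (Dp Dm : M ⊗[ℂ] MvPolynomial (Fin nn) ℂ →ₗ[ℂ] M ⊗[ℂ] MvPolynomial (Fin nn) ℂ)
    (hDp : Dp = ∑ i, TensorProduct.map (π (z i)) (LinearMap.mulLeft ℂ (MvPolynomial.X i)))
    (hDm : Dm = ∑ i, TensorProduct.map (π (z i)) (MvPolynomial.pderiv i).toLinearMap) :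
    ∀ m ∈ Mσ, ∀ q : MvPolynomial (Fin nn) ℂ,
      (∀ d, starRingEnd ℂ (MvPolynomial.coeff d q) = MvPolynomial.coeff d q) →
      F (Dp (m ⊗ₜ[ℂ] q)) (Dp (m ⊗ₜ[ℂ] q)) - F (Dm (m ⊗ₜ[ℂ] q)) (Dm (m ⊗ₜ[ℂ] q))
        = (-χ + σΩ) * F (m ⊗ₜ[ℂ] q) (m ⊗ₜ[ℂ] q) := by
  intro m hm q hq
  have hq_real : map (starRingEnd ℂ) q = q := MvPolynomial.ext _ _ fun d => by rw [coeff_map, hq]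
  have hΩk : (∑ j, π (w' j : L) * π (w j : L)) m = σΩ • m :=
    apply_eq_smul_of_mem_sSup_range _ hσΩ
      (fun _ hf => sum_mul_comp_of_intertwines ρ (fun x => π (x : L)) hf w' w) (hMσ ▸ hm)
  have hΩp : ∑ i, π (z i) (π (z i) m) = χ • m - σΩ • m := by
    rw [eq_sub_iff_add_eq', ← hΩk]
    simpa using LinearMap.congr_fun hχ m
  have hFMsum : ∑ i, FM (π (z i) m) (π (z i) m) = (-χ + σΩ) * FM m m := by
    simp only [hFMinv, hzreal, Finset.sum_neg_distrib, ← map_sum, hΩp, map_sub, map_smul,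
      smul_eq_mul]
    ring
  subst hDp hDm
  rw [form_dirac_sub_form_dirac hF hFP _ m hq_real, hFMsum, hF, mul_assoc]

end Statement6

end
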